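/- arXiv:1907.09922 — 3 statements merged into one kernel-verified Lean document; each statement's English description precedes it below -/
import Mathlib

section
/- Let β : ℝ → ℝ be a Schwartz function. Then there exists a constant C > 0 (depending only on β and the fixed bump function) such that for all k ∈ ℤ and all ρ ≥ 1: ‖P_k( y ↦ β(ρ sinh y) / cosh y )‖_{L^∞(ℝ)} ≤ C 2^k ρ^{-1}. -/
open MeasureTheory

/-- Fourier transform with the convention `ĥ(ξ) = (2π)^{-1/2} ∫ e^{-ixξ} h(x) dx`. -/
noncomputable def FT (h : ℝ → ℂ) (ξ : ℝ) : ℂ :=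
  (Real.sqrt (2 * Real.pi) : ℂ)⁻¹ * ∫ x : ℝ, Complex.exp (-(Complex.I * x * ξ)) * h x

/-- Inverse Fourier transform `(2π)^{-1/2} ∫ e^{+ixξ} h(ξ) dξ`. -/
noncomputable def IFT (h : ℝ → ℂ) (x : ℝ) : ℂ :=
  (Real.sqrt (2 * Real.pi) : ℂ)⁻¹ * ∫ ξ : ℝ, Complex.exp (Complex.I * x * ξ) * h ξ

/-- Littlewood–Paley projection `P_k h = ℱ^{-1}(ψ(η/2^k) ĥ(η))`, where
`ψ(η) = φ(η) − φ(2η)` for a fixed bump function `φ`. -/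
noncomputable def LP (φ : ℝ → ℝ) (k : ℤ) (h : ℝ → ℂ) : ℝ → ℂ :=
  IFT (fun η =>
    ((φ (η / 2 ^ k) - φ (2 * (η / 2 ^ k)) : ℝ) : ℂ) * FT h η)

lemma sq_le_sinh_sq (z : ℝ) : z ^ 2 ≤ Real.sinh z ^ 2 := by
  rcases le_total 0 z with hz | hz
  · have h1 : z ≤ Real.sinh z := Real.self_le_sinh_iff.2 hz
    nlinarith
  · have h1 : Real.sinh z ≤ z := by
      have := Real.self_le_sinh_iff.2 (neg_nonneg.2 hz)
      rw [Real.sinh_neg] at this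
      linarith
    have h2 : Real.sinh z ≤ 0 := Real.sinh_nonpos_iff.2 hz
    nlinarith

lemma norm_FT_le (h : ℝ → ℂ) (g : ℝ → ℝ) (hg : Integrable g)
    (hbd : ∀ x, ‖h x‖ ≤ g x) (ξ : ℝ) :
    ‖FT h ξ‖ ≤ (Real.sqrt (2 * Real.pi))⁻¹ * ∫ x : ℝ, g x := by
  have h2π : (0 : ℝ) < Real.sqrt (2 * Real.pi) :=
    Real.sqrt_pos.2 (by positivity)
  rw [FT, norm_mul]
  have hn : ‖((Real.sqrt (2 * Real.pi) : ℂ))⁻¹‖ = (Real.sqrt (2 * Real.pi))⁻¹ := by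
    rw [norm_inv, Complex.norm_real, Real.norm_eq_abs, abs_of_pos h2π]
  rw [hn]
  gcongr
  calc ‖∫ x : ℝ, Complex.exp (-(Complex.I * x * ξ)) * h x‖
      ≤ ∫ x : ℝ, ‖Complex.exp (-(Complex.I * x * ξ)) * h x‖ :=
        norm_integral_le_integral_norm _
    _ ≤ ∫ x : ℝ, g x := by
        apply integral_mono_of_nonneg (Filter.Eventually.of_forall fun x => norm_nonneg _) hg
        filter_upwards with x
        rw [norm_mul]
        have : ‖Complex.exp (-(Complex.I * x * ξ))‖ = 1 := by
          rw [Complex.norm_exp]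
          simp [Complex.exp_re]
        rw [this, one_mul]
        exact hbd x

/-- `‖P_k( β(ρ sinh ·)/cosh(·) )‖_{L^∞} ≤ C 2^k ρ^{-1}` for all `k ∈ ℤ` and `ρ ≥ 1`. -/
theorem LP_of_variable_coefficient_decay (φ : ℝ → ℝ) (hφ : ContDiff ℝ (⊤ : ℕ∞) φ)
    (hφc : HasCompactSupport φ)
    (hφ1 : ∀ η : ℝ, |η| ≤ 1 → φ η = 1) (hφ0 : ∀ η : ℝ, 2 ≤ |η| → φ η = 0)
    (β : SchwartzMap ℝ ℝ) :
    ∃ C > (0 : ℝ), ∀ k : ℤ, ∀ ρ : ℝ, 1 ≤ ρ → ∀ y : ℝ,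
      ‖LP φ k (fun z => ((β (ρ * Real.sinh z) / Real.cosh z : ℝ) : ℂ)) y‖
        ≤ C * (2 : ℝ) ^ k * ρ⁻¹ := by
  have h2π : (0 : ℝ) < Real.sqrt (2 * Real.pi) := Real.sqrt_pos.2 (by positivity)
  -- bound on φ
  obtain ⟨M, hM⟩ := hφ.continuous.bounded_above_of_compact_support hφc
  have hM0 : 0 ≤ M := (norm_nonneg _).trans (hM 0)
  -- Schwartz decay
  obtain ⟨C0, hC0pos, hC0⟩ := β.decay 0 0
  obtain ⟨C2, hC2pos, hC2⟩ := β.decay 2 0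
  set K := C0 + C2 with hK
  have hKpos : 0 < K := by positivity
  have hβ : ∀ u : ℝ, |β u| ≤ K / (1 + u ^ 2) := by
    intro u
    have h0 := hC0 u
    have h2 := hC2 u
    simp only [norm_iteratedFDeriv_zero, pow_zero, one_mul, Real.norm_eq_abs] at h0 h2
    rw [le_div_iff₀ (by positivity)]
    nlinarith [abs_nonneg (β u), sq_abs u]
  refine ⟨8 * M * K * Real.pi / Real.sqrt (2 * Real.pi) ^ 2 + 1, by positivity, ?_⟩
  intro k ρ hρ y
  have hρ0 : (0 : ℝ) < ρ := lt_of_lt_of_le one_pos hρ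
  set f : ℝ → ℂ := fun z => ((β (ρ * Real.sinh z) / Real.cosh z : ℝ) : ℂ) with hf
  -- L¹-type bound on f
  have hgint : Integrable (fun z : ℝ => K * (1 + (ρ * z) ^ 2)⁻¹) := by
    have : Integrable (fun z : ℝ => (1 + z ^ 2)⁻¹) := integrable_inv_one_add_sq
    exact (this.comp_mul_left' (ne_of_gt hρ0)).const_mul K
  have hgval : (∫ z : ℝ, K * (1 + (ρ * z) ^ 2)⁻¹) = K * Real.pi * ρ⁻¹ := by
    rw [integral_const_mul]
    have : (∫ z : ℝ, (1 + (ρ * z) ^ 2)⁻¹)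
        = |ρ⁻¹| • ∫ z : ℝ, (1 + z ^ 2)⁻¹ := by
      exact MeasureTheory.Measure.integral_comp_mul_left (fun z => (1 + z ^ 2)⁻¹) ρ
    rw [this, integral_univ_inv_one_add_sq, abs_of_pos (inv_pos.2 hρ0), smul_eq_mul]
    ring
  have hfbd : ∀ z : ℝ, ‖f z‖ ≤ K * (1 + (ρ * z) ^ 2)⁻¹ := by
    intro z
    have hcosh : (1 : ℝ) ≤ Real.cosh z := Real.one_le_cosh z
    have hnorm : ‖f z‖ = |β (ρ * Real.sinh z)| / Real.cosh z := by
      rw [hf]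
      rw [Complex.norm_real, Real.norm_eq_abs, abs_div,
        abs_of_pos (lt_of_lt_of_le one_pos hcosh)]
    rw [hnorm]
    calc |β (ρ * Real.sinh z)| / Real.cosh z
        ≤ |β (ρ * Real.sinh z)| := div_le_self (abs_nonneg _) hcosh
      _ ≤ K / (1 + (ρ * Real.sinh z) ^ 2) := hβ _
      _ ≤ K / (1 + (ρ * z) ^ 2) := by
          apply div_le_div_of_nonneg_left hKpos.le (by positivity)
          have := sq_le_sinh_sq z
          nlinarith [sq_nonneg ρ]
      _ = K * (1 + (ρ * z) ^ 2)⁻¹ := by rw [div_eq_mul_inv]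
  -- FT bound
  have hFT : ∀ ξ : ℝ, ‖FT f ξ‖ ≤ (Real.sqrt (2 * Real.pi))⁻¹ * (K * Real.pi * ρ⁻¹) := by
    intro ξ
    have := norm_FT_le f (fun z => K * (1 + (ρ * z) ^ 2)⁻¹) hgint hfbd ξ
    rwa [hgval] at this
  set B := (Real.sqrt (2 * Real.pi))⁻¹ * (K * Real.pi * ρ⁻¹) with hB
  have hBpos : 0 < B := by positivity
  -- the indicator dominating function
  set S : Set ℝ := Set.Icc (-(2 * 2 ^ k)) (2 * 2 ^ k) with hS
  have h2k : (0 : ℝ) < (2 : ℝ) ^ k := zpow_pos (by norm_num) k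
  have hdom : ∀ η : ℝ,
      ‖Complex.exp (Complex.I * y * η) *
        (((φ (η / 2 ^ k) - φ (2 * (η / 2 ^ k)) : ℝ) : ℂ) * FT f η)‖
      ≤ S.indicator (fun _ => 2 * M * B) η := by
    intro η
    have hexp : ‖Complex.exp (Complex.I * y * η)‖ = 1 := by
      rw [Complex.norm_exp]
      simp [Complex.exp_re]
    by_cases hη : η ∈ S
    · rw [Set.indicator_of_mem hη]
      rw [norm_mul, hexp, one_mul, norm_mul]
      calc ‖((φ (η / 2 ^ k) - φ (2 * (η / 2 ^ k)) : ℝ) : ℂ)‖ * ‖FT f η‖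
          ≤ (M + M) * B := by
            apply mul_le_mul _ (hFT η) (norm_nonneg _) (by positivity)
            rw [Complex.norm_real]
            calc ‖φ (η / 2 ^ k) - φ (2 * (η / 2 ^ k))‖
                ≤ ‖φ (η / 2 ^ k)‖ + ‖φ (2 * (η / 2 ^ k))‖ := norm_sub_le _ _
              _ ≤ M + M := add_le_add (hM _) (hM _)
        _ = 2 * M * B := by ring
    · rw [Set.indicator_of_notMem hη]
      have habs : 2 ≤ |η / 2 ^ k| := by
        rw [hS, Set.mem_Icc, not_and_or, not_le, not_le] at hη
        rw [abs_div, abs_of_pos h2k, le_div_iff₀ h2k]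
        rcases hη with h | h
        · rw [abs_of_neg (by linarith)]; linarith
        · rw [abs_of_pos (by linarith)]; linarith
      have h1 : φ (η / 2 ^ k) = 0 := hφ0 _ habs
      have h2 : φ (2 * (η / 2 ^ k)) = 0 := by
        apply hφ0
        rw [abs_mul, abs_two]
        linarith
      rw [h1, h2]
      simp
  -- integral of dominating function
  have hSint : (∫ η : ℝ, S.indicator (fun _ => 2 * M * B) η)
      = (4 * 2 ^ k) * (2 * M * B) := by
    rw [integral_indicator_const _ measurableSet_Icc, measureReal_def, Real.volume_Icc,
      ENNReal.toReal_ofReal (by linarith : (0:ℝ) ≤ 2 * 2 ^ k - -(2 * 2 ^ k)), smul_eq_mul]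
    ring
  -- assemble
  rw [LP, IFT, norm_mul]
  have hn : ‖((Real.sqrt (2 * Real.pi) : ℂ))⁻¹‖ = (Real.sqrt (2 * Real.pi))⁻¹ := by
    rw [norm_inv, Complex.norm_real, Real.norm_eq_abs, abs_of_pos h2π]
  rw [hn]
  have key : ‖∫ η : ℝ, Complex.exp (Complex.I * y * η) *
        (((φ (η / 2 ^ k) - φ (2 * (η / 2 ^ k)) : ℝ) : ℂ) * FT f η)‖
      ≤ (4 * 2 ^ k) * (2 * M * B) := by
    rw [← hSint]
    calc ‖∫ η : ℝ, Complex.exp (Complex.I * y * η) *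
          (((φ (η / 2 ^ k) - φ (2 * (η / 2 ^ k)) : ℝ) : ℂ) * FT f η)‖
        ≤ ∫ η : ℝ, ‖Complex.exp (Complex.I * y * η) *
          (((φ (η / 2 ^ k) - φ (2 * (η / 2 ^ k)) : ℝ) : ℂ) * FT f η)‖ :=
          norm_integral_le_integral_norm _
      _ ≤ ∫ η : ℝ, S.indicator (fun _ => 2 * M * B) η := by
          apply integral_mono_of_nonneg (Filter.Eventually.of_forall fun η => norm_nonneg _)
          · exact (integrable_indicator_iff measurableSet_Icc).2
              (integrableOn_const measure_Icc_lt_top.ne)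
          · exact Filter.Eventually.of_forall hdom
  calc (Real.sqrt (2 * Real.pi))⁻¹ * ‖∫ η : ℝ, Complex.exp (Complex.I * y * η) *
        (((φ (η / 2 ^ k) - φ (2 * (η / 2 ^ k)) : ℝ) : ℂ) * FT f η)‖
      ≤ (Real.sqrt (2 * Real.pi))⁻¹ * ((4 * 2 ^ k) * (2 * M * B)) := by
        gcongr
    _ = (8 * M * K * Real.pi / Real.sqrt (2 * Real.pi) ^ 2) * 2 ^ k * ρ⁻¹ := by
        rw [hB]
        field_simp
        ring
    _ ≤ (8 * M * K * Real.pi / Real.sqrt (2 * Real.pi) ^ 2 + 1) * 2 ^ k * ρ⁻¹ := by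
        have : (0:ℝ) ≤ 2 ^ k * ρ⁻¹ := by positivity
        nlinarith
end

section
/- Let β : ℝ → ℝ be measurable and suppose M := sup_{x∈ℝ} (1 + |x|)² |β(x)| is finite. Then there exists an absolute constant C > 0 such that for all ρ ≥ 1: ∫_ℝ |β(ρ sinh y)| dy ≤ C M ρ^{-1}. -/
open MeasureTheory

/-- If `|β(x)| ≤ M (1+|x|)^{-2}`, then `∫_ℝ |β(ρ sinh y)| dy ≤ C M ρ^{-1}` for `ρ ≥ 1`,
with an absolute constant `C`. -/
theorem integral_beta_sinh_decay :
    ∃ C > (0 : ℝ),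
      ∀ (β : ℝ → ℝ) (M : ℝ), Measurable β →
        (∀ x : ℝ, (1 + |x|) ^ 2 * |β x| ≤ M) →
        ∀ ρ : ℝ, 1 ≤ ρ →
          ∫⁻ y : ℝ, ENNReal.ofReal |β (ρ * Real.sinh y)|
            ≤ ENNReal.ofReal (C * M / ρ) := by
  refine ⟨2, by norm_num, fun β M hβ h ρ hρ => ?_⟩
  have hρ0 : (0 : ℝ) < ρ := lt_of_lt_of_le one_pos hρ
  have hM : 0 ≤ M := le_trans (by positivity) (h 0)
  set g : ℝ → ℝ := fun y => ((1 + ρ * |y|) ^ 2)⁻¹ with hg_def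
  -- integrability of g
  have hg_cont : Continuous g := by
    apply Continuous.inv₀
    · continuity
    · intro y
      have : 0 ≤ ρ * |y| := mul_nonneg hρ0.le (abs_nonneg y)
      positivity
  have hg_int : Integrable g := by
    refine integrable_inv_one_add_sq.mono hg_cont.aestronglyMeasurable
      (ae_of_all _ fun y => ?_)
    have h1 : (1 : ℝ) + y ^ 2 ≤ (1 + ρ * |y|) ^ 2 := by
      have hy : 0 ≤ ρ * |y| := mul_nonneg hρ0.le (abs_nonneg y)
      have hy2 : y ^ 2 ≤ (ρ * |y|) ^ 2 := by
        have := abs_nonneg y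
        have : |y| ≤ ρ * |y| := le_mul_of_one_le_left this hρ
        calc y ^ 2 = |y| ^ 2 := (sq_abs y).symm
          _ ≤ (ρ * |y|) ^ 2 := by nlinarith [abs_nonneg y]
      nlinarith
    have hpos : (0 : ℝ) < 1 + y ^ 2 := by positivity
    rw [Real.norm_eq_abs, Real.norm_eq_abs,
      abs_of_nonneg (inv_nonneg.2 (sq_nonneg (1 + ρ * |y|))),
      abs_of_nonneg (inv_nonneg.2 hpos.le)]
    exact inv_anti₀ hpos h1
  -- value of ∫ g
  have hIoi1 : ∫ x in Set.Ioi (0 : ℝ), ((1 + x) ^ 2)⁻¹ = 1 := by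
    have hint : IntegrableOn (fun x : ℝ => ((1 + x) ^ 2)⁻¹) (Set.Ioi 0) := by
      refine integrable_inv_one_add_sq.integrableOn.mono' ?_ ?_
      · exact (((measurable_const.add measurable_id).pow_const 2).inv).aestronglyMeasurable.restrict
      · refine (ae_restrict_iff' measurableSet_Ioi).2 (ae_of_all _ fun x hx => ?_)
        have hx0 : (0 : ℝ) < x := hx
        rw [Real.norm_eq_abs, abs_of_nonneg (inv_nonneg.2 (sq_nonneg _))]
        exact inv_anti₀ (by positivity) (by nlinarith)
    have hderiv : ∀ x ∈ Set.Ici (0 : ℝ),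
        HasDerivAt (fun x : ℝ => -(1 + x)⁻¹) (((1 + x) ^ 2)⁻¹) x := by
      intro x hx
      have hne : (1 : ℝ) + x ≠ 0 := by
        have : (0 : ℝ) ≤ x := hx
        positivity
      have := (((hasDerivAt_id x).const_add 1).inv hne).neg
      refine this.congr_deriv ?_
      simp [neg_div]
    have htend : Filter.Tendsto (fun x : ℝ => -(1 + x)⁻¹) Filter.atTop (nhds 0) := by
      have : Filter.Tendsto (fun x : ℝ => (1 + x)⁻¹) Filter.atTop (nhds 0) :=
        Filter.Tendsto.inv_tendsto_atTop (Filter.tendsto_atTop_add_const_left _ 1 Filter.tendsto_id)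
      simpa using this.neg
    have := integral_Ioi_of_hasDerivAt_of_tendsto' hderiv hint htend
    simpa using this
  have hIoi2 : ∫ x in Set.Ioi (0 : ℝ), ((1 + ρ * x) ^ 2)⁻¹ = ρ⁻¹ := by
    have := integral_comp_mul_left_Ioi (fun x : ℝ => ((1 + x) ^ 2)⁻¹) 0 hρ0
    simp only [mul_zero, smul_eq_mul] at this
    rw [this, hIoi1, mul_one]
  have hg_val : ∫ y : ℝ, g y = 2 / ρ := by
    have := integral_comp_abs (f := fun x : ℝ => ((1 + ρ * x) ^ 2)⁻¹)
    simp only [hg_def]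
    rw [this, hIoi2]
    ring
  -- pointwise bound
  have hpt : ∀ y : ℝ, |β (ρ * Real.sinh y)| ≤ M * g y := by
    intro y
    have h1 := h (ρ * Real.sinh y)
    have h2 : ρ * |y| ≤ |ρ * Real.sinh y| := by
      rw [abs_mul, abs_of_pos hρ0, Real.abs_sinh]
      exact mul_le_mul_of_nonneg_left (Real.self_le_sinh_iff.mpr (abs_nonneg y)) hρ0.le
    have hpos : (0 : ℝ) < (1 + ρ * |y|) ^ 2 := by
      have : 0 ≤ ρ * |y| := mul_nonneg hρ0.le (abs_nonneg y)
      positivity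
    have h3 : (1 + ρ * |y|) ^ 2 * |β (ρ * Real.sinh y)| ≤ M := by
      refine le_trans ?_ h1
      have hb := abs_nonneg (β (ρ * Real.sinh y))
      have h4 : (1 + ρ * |y|) ^ 2 ≤ (1 + |ρ * Real.sinh y|) ^ 2 := by
        nlinarith [mul_nonneg hρ0.le (abs_nonneg y), abs_nonneg (ρ * Real.sinh y)]
      exact mul_le_mul_of_nonneg_right h4 hb
    show |β (ρ * Real.sinh y)| ≤ M * ((1 + ρ * |y|) ^ 2)⁻¹
    calc |β (ρ * Real.sinh y)| = (1 + ρ * |y|) ^ 2 * |β (ρ * Real.sinh y)| * ((1 + ρ * |y|) ^ 2)⁻¹ := by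
          field_simp
      _ ≤ M * ((1 + ρ * |y|) ^ 2)⁻¹ :=
          mul_le_mul_of_nonneg_right h3 (inv_nonneg.2 hpos.le)
  calc ∫⁻ y : ℝ, ENNReal.ofReal |β (ρ * Real.sinh y)|
      ≤ ∫⁻ y : ℝ, ENNReal.ofReal (M * g y) :=
        lintegral_mono fun y => ENNReal.ofReal_le_ofReal (hpt y)
    _ = ENNReal.ofReal (∫ y : ℝ, M * g y) := by
        rw [← ofReal_integral_eq_lintegral_ofReal (hg_int.const_mul M)
          (ae_of_all _ fun y => mul_nonneg hM (inv_nonneg.2 (sq_nonneg _)))]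
    _ = ENNReal.ofReal (2 * M / ρ) := by
        rw [integral_const_mul, hg_val]
        ring_nf
end

section
/- Let β₀ ∈ ℝ, let β : ℝ → ℝ be continuous, and let u be a C² solution of the nonlinear Klein–Gordon equation ∂_t²u − ∂_x²u + u = β₀ u³ + β(x) u³ on the region {(t,x) : t > |x|}. Define w(ρ,y) := (ρ cosh y)^{1/2} u(ρ cosh y, ρ sinh y) for ρ > 0, y ∈ ℝ. Then for all ρ > 0 and y ∈ ℝ: ∂_ρ²w − ρ^{-2} ∂_y²w + ρ^{-2} tanh(y) ∂_y w + w + (3/(4ρ²)) sech²(y) w = ρ^{-1} ( β₀ + β(ρ sinh y) ) sech(y) w³. -/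
open MeasureTheory

/-- Partial derivative in the first variable. -/
noncomputable def pt (u : ℝ → ℝ → ℝ) (t x : ℝ) : ℝ := deriv (fun s => u s x) t

/-- Partial derivative in the second variable. -/
noncomputable def px (u : ℝ → ℝ → ℝ) (t x : ℝ) : ℝ := deriv (fun y => u t y) x

/-- The rescaled solution in hyperbolic coordinates:
`w(ρ,y) = (ρ cosh y)^{1/2} u(ρ cosh y, ρ sinh y)`. -/
noncomputable def wHyp (u : ℝ → ℝ → ℝ) (ρ y : ℝ) : ℝ :=
  Real.sqrt (ρ * Real.cosh y) * u (ρ * Real.cosh y) (ρ * Real.sinh y)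

private lemma abs_sinh_lt_cosh' (z : ℝ) : |Real.sinh z| < Real.cosh z := by
  nlinarith [sq_abs (Real.sinh z), Real.cosh_sq z, Real.cosh_pos z, abs_nonneg (Real.sinh z)]

private lemma clm_apply_pair (L : ℝ × ℝ →L[ℝ] ℝ) (a b : ℝ) :
    L (a, b) = a * L (1, 0) + b * L (0, 1) := by
  have h : ((a, b) : ℝ × ℝ) = a • ((1:ℝ), (0:ℝ)) + b • ((0:ℝ), (1:ℝ)) := by
    simp [Prod.ext_iff]
  rw [h, map_add, _root_.map_smul, _root_.map_smul, smul_eq_mul, smul_eq_mul]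

private lemma clm2_apply_pair (L : ℝ × ℝ →L[ℝ] (ℝ × ℝ →L[ℝ] ℝ)) (a b : ℝ) (w : ℝ × ℝ) :
    L (a, b) w = a * L (1, 0) w + b * L (0, 1) w := by
  have h : ((a, b) : ℝ × ℝ) = a • ((1:ℝ), (0:ℝ)) + b • ((0:ℝ), (1:ℝ)) := by
    simp [Prod.ext_iff]
  rw [h, map_add, _root_.map_smul, _root_.map_smul]
  simp

set_option maxHeartbeats 2000000 in
/-- The nonlinear Klein–Gordon equation in hyperbolic coordinates: if
`∂_t²u − ∂_x²u + u = β₀u³ + β(x)u³` in the interior of the light cone, then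
`w(ρ,y) = (ρ cosh y)^{1/2} u(ρ cosh y, ρ sinh y)` satisfies
`∂_ρ²w − ρ^{-2}∂_y²w + ρ^{-2} tanh(y) ∂_y w + w + (3/(4ρ²)) sech²(y) w
  = ρ^{-1}(β₀ + β(ρ sinh y)) sech(y) w³`. -/
theorem nlkg_hyperbolic_coordinates (β₀ : ℝ) (β : ℝ → ℝ) (hβ : Continuous β)
    (u : ℝ → ℝ → ℝ)
    (hu : ContDiffOn ℝ 2 (fun p : ℝ × ℝ => u p.1 p.2) {p : ℝ × ℝ | |p.2| < p.1})
    (heq : ∀ t x : ℝ, |x| < t →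
      pt (pt u) t x - px (px u) t x + u t x = β₀ * (u t x) ^ 3 + β x * (u t x) ^ 3) :
    ∀ ρ : ℝ, 0 < ρ → ∀ y : ℝ,
      pt (pt (wHyp u)) ρ y - (ρ ^ 2)⁻¹ * px (px (wHyp u)) ρ y
          + (ρ ^ 2)⁻¹ * Real.tanh y * px (wHyp u) ρ y + wHyp u ρ y
          + 3 / (4 * ρ ^ 2) * ((Real.cosh y)⁻¹) ^ 2 * wHyp u ρ y
        = ρ⁻¹ * (β₀ + β (ρ * Real.sinh y)) * (Real.cosh y)⁻¹ * (wHyp u ρ y) ^ 3 := by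
  set S := {p : ℝ × ℝ | |p.2| < p.1} with hSdef
  have hSopen : IsOpen S := isOpen_lt continuous_snd.abs continuous_fst
  set F : ℝ × ℝ → ℝ := fun p => u p.1 p.2 with hFdef
  have hC2 : ∀ p ∈ S, ContDiffAt ℝ 2 F p :=
    fun p hp => hu.contDiffAt (hSopen.mem_nhds hp)
  have hdF : ∀ p ∈ S, HasFDerivAt F (fderiv ℝ F p) p := fun p hp =>
    ((hC2 p hp).differentiableAt (by norm_num)).hasFDerivAt
  have hdF1 : ∀ p ∈ S, ContDiffAt ℝ 1 (fderiv ℝ F) p := fun p hp =>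
    (hC2 p hp).fderiv_right (by norm_num)
  have hdF2 : ∀ p ∈ S, HasFDerivAt (fderiv ℝ F) (fderiv ℝ (fderiv ℝ F) p) p := fun p hp =>
    ((hdF1 p hp).differentiableAt one_ne_zero).hasFDerivAt
  have hsymm : ∀ p ∈ S, ∀ v w : ℝ × ℝ,
      fderiv ℝ (fderiv ℝ F) p v w = fderiv ℝ (fderiv ℝ F) p w v :=
    fun p hp => (hC2 p hp).isSymmSndFDerivAt minSmoothness_of_isRCLikeNormedField.le
  have hdFv : ∀ p ∈ S, ∀ (γ : ℝ → ℝ × ℝ) (v : ℝ × ℝ) (r : ℝ), γ r = p →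
      HasDerivAt γ v r → HasDerivAt (fun z => F (γ z)) (fderiv ℝ F p v) r := by
    intro p hp γ v r hγ hγ'
    subst hγ
    exact ((hdF _ hp).comp_hasDerivAt r hγ' : HasDerivAt (F ∘ γ) _ r)
  have hdfv : ∀ (w : ℝ × ℝ), ∀ p ∈ S, ∀ (γ : ℝ → ℝ × ℝ) (v : ℝ × ℝ) (r : ℝ), γ r = p →
      HasDerivAt γ v r →
      HasDerivAt (fun z => fderiv ℝ F (γ z) w) (fderiv ℝ (fderiv ℝ F) p v w) r := by
    intro w p hp γ v r hγ hγ'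
    have h1 : HasFDerivAt (fun q => fderiv ℝ F q w)
        ((ContinuousLinearMap.apply ℝ ℝ w).comp (fderiv ℝ (fderiv ℝ F) p)) p :=
      (ContinuousLinearMap.apply ℝ ℝ w).hasFDerivAt.comp p (hdF2 p hp)
    subst hγ
    have h2 := h1.comp_hasDerivAt r hγ'
    simpa [Function.comp_def] using h2
  -- first derivatives
  have hptu : ∀ t x : ℝ, |x| < t → pt u t x = fderiv ℝ F (t, x) (1, 0) := by
    intro t x h
    have hγ : HasDerivAt (fun s : ℝ => ((s, x) : ℝ × ℝ)) ((1:ℝ), (0:ℝ)) t :=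
      (hasDerivAt_id t).prodMk (hasDerivAt_const t x)
    exact (hdFv (t, x) h _ _ t rfl hγ).deriv
  have hpxu : ∀ t x : ℝ, |x| < t → px u t x = fderiv ℝ F (t, x) (0, 1) := by
    intro t x h
    have hγ : HasDerivAt (fun z : ℝ => ((t, z) : ℝ × ℝ)) ((0:ℝ), (1:ℝ)) x :=
      (hasDerivAt_const x t).prodMk (hasDerivAt_id x)
    exact (hdFv (t, x) h _ _ x rfl hγ).deriv
  have hptpt : ∀ t x : ℝ, |x| < t →
      pt (pt u) t x = fderiv ℝ (fderiv ℝ F) (t, x) (1, 0) (1, 0) := by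
    intro t x h
    have hγ : HasDerivAt (fun s : ℝ => ((s, x) : ℝ × ℝ)) ((1:ℝ), (0:ℝ)) t :=
      (hasDerivAt_id t).prodMk (hasDerivAt_const t x)
    have hd := hdfv (1, 0) (t, x) h _ _ t rfl hγ
    have hev : (fun s => pt u s x) =ᶠ[nhds t] (fun s => fderiv ℝ F (s, x) (1, 0)) := by
      have hcont : Continuous fun s : ℝ => ((s, x) : ℝ × ℝ) := continuous_id.prodMk continuous_const
      filter_upwards [(hSopen.preimage hcont).mem_nhds (show t ∈ _ from h)] with s hs
      exact hptu s x hs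
    exact hev.deriv_eq.trans hd.deriv
  have hpxpx : ∀ t x : ℝ, |x| < t →
      px (px u) t x = fderiv ℝ (fderiv ℝ F) (t, x) (0, 1) (0, 1) := by
    intro t x h
    have hγ : HasDerivAt (fun z : ℝ => ((t, z) : ℝ × ℝ)) ((0:ℝ), (1:ℝ)) x :=
      (hasDerivAt_const x t).prodMk (hasDerivAt_id x)
    have hd := hdfv (0, 1) (t, x) h _ _ x rfl hγ
    have hev : (fun z => px u t z) =ᶠ[nhds x] (fun z => fderiv ℝ F (t, z) (0, 1)) := by
      have hcont : Continuous fun z : ℝ => ((t, z) : ℝ × ℝ) := continuous_const.prodMk continuous_id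
      filter_upwards [(hSopen.preimage hcont).mem_nhds (show x ∈ _ from h)] with z hz
      exact hpxu t z hz
    exact hev.deriv_eq.trans hd.deriv
  intro ρ hρ y
  have hcy := Real.cosh_pos y
  have hmem : ∀ r : ℝ, 0 < r → ((r * Real.cosh y, r * Real.sinh y) : ℝ × ℝ) ∈ S := by
    intro r hr
    have h1 := abs_sinh_lt_cosh' y
    simp only [hSdef, Set.mem_setOf_eq, abs_mul, abs_of_pos hr]
    exact mul_lt_mul_of_pos_left h1 hr
  have hp0 := hmem ρ hρ
  have hQpos : 0 < Real.sqrt (ρ * Real.cosh y) := Real.sqrt_pos.mpr (by positivity)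
  -- ρ-direction first derivative
  have hsq : ∀ r : ℝ, 0 < r → HasDerivAt (fun r' : ℝ => Real.sqrt (r' * Real.cosh y))
      (1 / (2 * Real.sqrt (r * Real.cosh y)) * Real.cosh y) r := by
    intro r hr
    have h1 : HasDerivAt (fun r' : ℝ => r' * Real.cosh y) (Real.cosh y) r :=
      hasDerivAt_mul_const _
    exact (Real.hasDerivAt_sqrt (by positivity)).comp r h1
  have hcurveρ : ∀ r : ℝ, HasDerivAt
      (fun r' : ℝ => ((r' * Real.cosh y, r' * Real.sinh y) : ℝ × ℝ))
      ((Real.cosh y, Real.sinh y)) r :=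
    fun r => (hasDerivAt_mul_const _).prodMk (hasDerivAt_mul_const _)
  have hFρ : ∀ r : ℝ, 0 < r → HasDerivAt
      (fun r' : ℝ => F (r' * Real.cosh y, r' * Real.sinh y))
      (Real.cosh y * fderiv ℝ F (r * Real.cosh y, r * Real.sinh y) (1, 0)
        + Real.sinh y * fderiv ℝ F (r * Real.cosh y, r * Real.sinh y) (0, 1)) r := by
    intro r hr
    have h := hdFv _ (hmem r hr) _ _ r rfl (hcurveρ r)
    rwa [clm_apply_pair] at h
  have hW1 : ∀ r : ℝ, 0 < r → HasDerivAt (fun r' => wHyp u r' y)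
      (1 / (2 * Real.sqrt (r * Real.cosh y)) * Real.cosh y
          * u (r * Real.cosh y) (r * Real.sinh y)
        + Real.sqrt (r * Real.cosh y) *
          (Real.cosh y * fderiv ℝ F (r * Real.cosh y, r * Real.sinh y) (1, 0)
            + Real.sinh y * fderiv ℝ F (r * Real.cosh y, r * Real.sinh y) (0, 1))) r := by
    intro r hr
    exact (hsq r hr).mul (hFρ r hr)
  have hptW : ∀ r : ℝ, 0 < r → pt (wHyp u) r y = 1 / (2 * Real.sqrt (r * Real.cosh y)) * Real.cosh y
          * u (r * Real.cosh y) (r * Real.sinh y)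
        + Real.sqrt (r * Real.cosh y) *
          (Real.cosh y * fderiv ℝ F (r * Real.cosh y, r * Real.sinh y) (1, 0)
            + Real.sinh y * fderiv ℝ F (r * Real.cosh y, r * Real.sinh y) (0, 1)) :=
    fun r hr => (hW1 r hr).deriv
  -- ρ-direction second derivative
  have hA : HasDerivAt (fun r : ℝ => 1 / (2 * Real.sqrt (r * Real.cosh y)))
      (-(Real.cosh y) / (4 * Real.sqrt (ρ * Real.cosh y) ^ 3)) ρ := by
    have hden : HasDerivAt (fun r : ℝ => 2 * Real.sqrt (r * Real.cosh y))
        (2 * (1 / (2 * Real.sqrt (ρ * Real.cosh y)) * Real.cosh y)) ρ := (hsq ρ hρ).const_mul 2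
    have h := (hasDerivAt_const ρ (1:ℝ)).div hden (by positivity)
    replace h : HasDerivAt (fun r : ℝ => 1 / (2 * Real.sqrt (r * Real.cosh y))) _ ρ := h
    convert h using 1
    field_simp
    ring
  have hf1ρ : HasDerivAt (fun r : ℝ => fderiv ℝ F (r * Real.cosh y, r * Real.sinh y) (1, 0))
      (Real.cosh y * fderiv ℝ (fderiv ℝ F) (ρ * Real.cosh y, ρ * Real.sinh y) (1, 0) (1, 0)
        + Real.sinh y * fderiv ℝ (fderiv ℝ F) (ρ * Real.cosh y, ρ * Real.sinh y) (1, 0) (0, 1))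
      ρ := by
    have h := hdfv (1, 0) _ hp0 _ _ ρ rfl (hcurveρ ρ)
    rw [clm2_apply_pair] at h
    rwa [hsymm _ hp0 (0, 1) (1, 0)] at h
  have hf2ρ : HasDerivAt (fun r : ℝ => fderiv ℝ F (r * Real.cosh y, r * Real.sinh y) (0, 1))
      (Real.cosh y * fderiv ℝ (fderiv ℝ F) (ρ * Real.cosh y, ρ * Real.sinh y) (1, 0) (0, 1)
        + Real.sinh y * fderiv ℝ (fderiv ℝ F) (ρ * Real.cosh y, ρ * Real.sinh y) (0, 1) (0, 1))
      ρ := by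
    have h := hdfv (0, 1) _ hp0 _ _ ρ rfl (hcurveρ ρ)
    rwa [clm2_apply_pair] at h
  have hP1' := ((hA.mul_const (Real.cosh y)).mul (hFρ ρ hρ)).add
    ((hsq ρ hρ).mul ((hf1ρ.const_mul (Real.cosh y)).add (hf2ρ.const_mul (Real.sinh y))))
  have hev : (fun r => pt (wHyp u) r y) =ᶠ[nhds ρ]
      (fun r => 1 / (2 * Real.sqrt (r * Real.cosh y)) * Real.cosh y
          * u (r * Real.cosh y) (r * Real.sinh y)
        + Real.sqrt (r * Real.cosh y) *
          (Real.cosh y * fderiv ℝ F (r * Real.cosh y, r * Real.sinh y) (1, 0)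
            + Real.sinh y * fderiv ℝ F (r * Real.cosh y, r * Real.sinh y) (0, 1))) := by
    filter_upwards [eventually_gt_nhds hρ] with r hr
    exact hptW r hr
  have key1 := by have := hev.deriv_eq.trans hP1'.deriv; simpa only [Pi.add_apply, Pi.mul_apply] using this
  have hmem2 : ∀ z : ℝ, ((ρ * Real.cosh z, ρ * Real.sinh z) : ℝ × ℝ) ∈ S := by
    intro z
    have h1 := abs_sinh_lt_cosh' z
    simp only [hSdef, Set.mem_setOf_eq, abs_mul, abs_of_pos hρ]
    exact mul_lt_mul_of_pos_left h1 hρ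
  -- y-direction first derivative
  have hsqy : ∀ z : ℝ, HasDerivAt (fun z' : ℝ => Real.sqrt (ρ * Real.cosh z'))
      (1 / (2 * Real.sqrt (ρ * Real.cosh z)) * (ρ * Real.sinh z)) z := by
    intro z
    have h1 : HasDerivAt (fun z' : ℝ => ρ * Real.cosh z') (ρ * Real.sinh z) z :=
      (Real.hasDerivAt_cosh z).const_mul ρ
    exact (Real.hasDerivAt_sqrt (mul_pos hρ (Real.cosh_pos z)).ne').comp z h1
  have hcurvey : ∀ z : ℝ, HasDerivAt
      (fun z' : ℝ => ((ρ * Real.cosh z', ρ * Real.sinh z') : ℝ × ℝ))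
      ((ρ * Real.sinh z, ρ * Real.cosh z)) z :=
    fun z => ((Real.hasDerivAt_cosh z).const_mul ρ).prodMk ((Real.hasDerivAt_sinh z).const_mul ρ)
  have hFψ : ∀ z : ℝ, HasDerivAt (fun z' : ℝ => F (ρ * Real.cosh z', ρ * Real.sinh z'))
      (ρ * Real.sinh z * fderiv ℝ F (ρ * Real.cosh z, ρ * Real.sinh z) (1, 0)
        + ρ * Real.cosh z * fderiv ℝ F (ρ * Real.cosh z, ρ * Real.sinh z) (0, 1)) z := by
    intro z
    have h := hdFv _ (hmem2 z) _ _ z rfl (hcurvey z)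
    rwa [clm_apply_pair] at h
  have hW2 : ∀ z : ℝ, HasDerivAt (fun z' => wHyp u ρ z')
      (1 / (2 * Real.sqrt (ρ * Real.cosh z)) * (ρ * Real.sinh z)
          * u (ρ * Real.cosh z) (ρ * Real.sinh z)
        + Real.sqrt (ρ * Real.cosh z) *
          (ρ * Real.sinh z * fderiv ℝ F (ρ * Real.cosh z, ρ * Real.sinh z) (1, 0)
            + ρ * Real.cosh z * fderiv ℝ F (ρ * Real.cosh z, ρ * Real.sinh z) (0, 1))) z :=
    fun z => (hsqy z).mul (hFψ z)
  have hpxW : ∀ z : ℝ, px (wHyp u) ρ z =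
      1 / (2 * Real.sqrt (ρ * Real.cosh z)) * (ρ * Real.sinh z)
          * u (ρ * Real.cosh z) (ρ * Real.sinh z)
        + Real.sqrt (ρ * Real.cosh z) *
          (ρ * Real.sinh z * fderiv ℝ F (ρ * Real.cosh z, ρ * Real.sinh z) (1, 0)
            + ρ * Real.cosh z * fderiv ℝ F (ρ * Real.cosh z, ρ * Real.sinh z) (0, 1)) :=
    fun z => (hW2 z).deriv
  -- y-direction second derivative
  have hAy : HasDerivAt (fun z : ℝ => 1 / (2 * Real.sqrt (ρ * Real.cosh z)))
      (-(ρ * Real.sinh y) / (4 * Real.sqrt (ρ * Real.cosh y) ^ 3)) y := by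
    have hden : HasDerivAt (fun z : ℝ => 2 * Real.sqrt (ρ * Real.cosh z))
        (2 * (1 / (2 * Real.sqrt (ρ * Real.cosh y)) * (ρ * Real.sinh y))) y :=
      (hsqy y).const_mul 2
    have h := (hasDerivAt_const y (1:ℝ)).div hden (by positivity)
    replace h : HasDerivAt (fun z : ℝ => 1 / (2 * Real.sqrt (ρ * Real.cosh z))) _ y := h
    convert h using 1
    field_simp
    ring
  have hB : HasDerivAt (fun z : ℝ => ρ * Real.sinh z) (ρ * Real.cosh y) y :=
    (Real.hasDerivAt_sinh y).const_mul ρ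
  have hCd : HasDerivAt (fun z : ℝ => ρ * Real.cosh z) (ρ * Real.sinh y) y :=
    (Real.hasDerivAt_cosh y).const_mul ρ
  have hf1y : HasDerivAt (fun z : ℝ => fderiv ℝ F (ρ * Real.cosh z, ρ * Real.sinh z) (1, 0))
      (ρ * Real.sinh y * fderiv ℝ (fderiv ℝ F) (ρ * Real.cosh y, ρ * Real.sinh y) (1, 0) (1, 0)
        + ρ * Real.cosh y * fderiv ℝ (fderiv ℝ F) (ρ * Real.cosh y, ρ * Real.sinh y) (1, 0) (0, 1))
      y := by
    have h := hdfv (1, 0) _ hp0 _ _ y rfl (hcurvey y)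
    rw [clm2_apply_pair] at h
    rwa [hsymm _ hp0 (0, 1) (1, 0)] at h
  have hf2y : HasDerivAt (fun z : ℝ => fderiv ℝ F (ρ * Real.cosh z, ρ * Real.sinh z) (0, 1))
      (ρ * Real.sinh y * fderiv ℝ (fderiv ℝ F) (ρ * Real.cosh y, ρ * Real.sinh y) (1, 0) (0, 1)
        + ρ * Real.cosh y * fderiv ℝ (fderiv ℝ F) (ρ * Real.cosh y, ρ * Real.sinh y) (0, 1) (0, 1))
      y := by
    have h := hdfv (0, 1) _ hp0 _ _ y rfl (hcurvey y)
    rwa [clm2_apply_pair] at h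
  have hQ1' := ((hAy.mul hB).mul (hFψ y)).add
    ((hsqy y).mul ((hB.mul hf1y).add (hCd.mul hf2y)))
  have hfe : (fun z => px (wHyp u) ρ z) =ᶠ[nhds y]
      (fun z => 1 / (2 * Real.sqrt (ρ * Real.cosh z)) * (ρ * Real.sinh z)
          * u (ρ * Real.cosh z) (ρ * Real.sinh z)
        + Real.sqrt (ρ * Real.cosh z) *
          (ρ * Real.sinh z * fderiv ℝ F (ρ * Real.cosh z, ρ * Real.sinh z) (1, 0)
            + ρ * Real.cosh z * fderiv ℝ F (ρ * Real.cosh z, ρ * Real.sinh z) (0, 1))) :=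
    Filter.Eventually.of_forall hpxW
  have key2 := by have := hfe.deriv_eq.trans hQ1'.deriv; simpa only [Pi.add_apply, Pi.mul_apply] using this
  -- assemble
  have habs : |ρ * Real.sinh y| < ρ * Real.cosh y := by
    rw [abs_mul, abs_of_pos hρ]
    exact mul_lt_mul_of_pos_left (abs_sinh_lt_cosh' y) hρ
  have heq' := heq (ρ * Real.cosh y) (ρ * Real.sinh y) habs
  rw [hptpt _ _ habs, hpxpx _ _ habs] at heq'
  have e1 : pt (pt (wHyp u)) ρ y = deriv (fun r => pt (wHyp u) r y) ρ := rfl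
  have e2 : px (px (wHyp u)) ρ y = deriv (fun z => px (wHyp u) ρ z) y := rfl
  rw [e1, key1, e2, key2, hpxW y, Real.tanh_eq_sinh_div_cosh]
  simp only [wHyp, hFdef]
  set q := Real.sqrt (ρ * Real.cosh y) with hqdef
  set c := Real.cosh y with hcdef
  set sh := Real.sinh y with hshdef
  have hq2 : q ^ 2 = ρ * c := by
    rw [hqdef]
    exact Real.sq_sqrt (mul_pos hρ hcy).le
  have hq0 : q ≠ 0 := by
    rw [hqdef]
    exact (Real.sqrt_pos.mpr (mul_pos hρ hcy)).ne'
  have hc0 : c ≠ 0 := hcy.ne'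
  have hcs : c ^ 2 = sh ^ 2 + 1 := by rw [hcdef, hshdef]; exact Real.cosh_sq y
  simp only [hFdef] at heq'
  have hb11 : ((fderiv ℝ (fderiv ℝ (fun p : ℝ × ℝ => u p.1 p.2)) (ρ * c, ρ * sh)) (1, 0)) (1, 0)
      = ((fderiv ℝ (fderiv ℝ (fun p : ℝ × ℝ => u p.1 p.2)) (ρ * c, ρ * sh)) (0, 1)) (0, 1)
        - u (ρ * c) (ρ * sh) + β₀ * u (ρ * c) (ρ * sh) ^ 3
        + β (ρ * sh) * u (ρ * c) (ρ * sh) ^ 3 := by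
    linarith [heq']
  rw [hb11]
  have hsh2 : sh ^ 2 = c ^ 2 - 1 := by linarith [hcs]
  have hsh3 : sh ^ 3 = (c ^ 2 - 1) * sh := by rw [show sh^3 = sh^2*sh by ring, hsh2]
  have hsh4 : sh ^ 4 = (c ^ 2 - 1) ^ 2 := by rw [show sh^4 = (sh^2)^2 by ring, hsh2]
  have hq4 : q ^ 4 = (ρ * c) ^ 2 := by rw [show q^4 = (q^2)^2 by ring, hq2]
  have hq3 : q ^ 3 = (ρ * c) * q := by rw [show q^3 = q^2*q by ring, hq2]
  have hq5 : q ^ 5 = (ρ * c) ^ 2 * q := by rw [show q^5 = (q^2)^2*q by ring, hq2]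
  have hq6 : q ^ 6 = (ρ * c) ^ 3 := by rw [show q^6 = (q^2)^3 by ring, hq2]
  have hq7 : q ^ 7 = (ρ * c) ^ 3 * q := by rw [show q^7 = (q^2)^3*q by ring, hq2]
  have hq8 : q ^ 8 = (ρ * c) ^ 4 := by rw [show q^8 = (q^2)^4 by ring, hq2]
  have hq9 : q ^ 9 = (ρ * c) ^ 4 * q := by rw [show q^9 = (q^2)^4*q by ring, hq2]
  have hq10 : q ^ 10 = (ρ * c) ^ 5 := by rw [show q^10 = (q^2)^5 by ring, hq2]
  have hq11 : q ^ 11 = (ρ * c) ^ 5 * q := by rw [show q^11 = (q^2)^5*q by ring, hq2]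
  have hq12 : q ^ 12 = (ρ * c) ^ 6 := by rw [show q^12 = (q^2)^6 by ring, hq2]
  have hq13 : q ^ 13 = (ρ * c) ^ 6 * q := by rw [show q^13 = (q^2)^6*q by ring, hq2]
  have hq14 : q ^ 14 = (ρ * c) ^ 7 := by rw [show q^14 = (q^2)^7 by ring, hq2]
  have hq15 : q ^ 15 = (ρ * c) ^ 7 * q := by rw [show q^15 = (q^2)^7*q by ring, hq2]
  have hq16 : q ^ 16 = (ρ * c) ^ 8 := by rw [show q^16 = (q^2)^8 by ring, hq2]
  field_simp
  ring_nf
  simp only [hq16, hq15, hq14, hq13, hq12, hq11, hq10, hq9, hq8, hq7, hq6, hq5, hq4, hq3, hq2,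
    hsh4, hsh3, hsh2]
  ring
end
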